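/- Let ς ∈ {i, −i} and c ≠ 0, x₂ arbitrary. The 9×9 matrix given in block form [1], [[ς+1, −ς/c],[c, 0]], [[0,0,−ς/c²],[x₂,1,x₂ς/c²],[c²,0,ς+1]], [[0, −1/c],[ςc, ς+1]], [ς] satisfies the braid relation R̂₁R̂₂R̂₁ = R̂₂R̂₁R̂₂. -/

import Mathlib

open Matrix Polynomial

noncomputable section

/-- `R̂ ⊗ 1` acting on `V ⊗ V ⊗ V` with `V = ℂ^3`. -/
def R1 (R : Matrix (Fin 3 × Fin 3) (Fin 3 × Fin 3) ℂ) :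
    Matrix (Fin 3 × Fin 3 × Fin 3) (Fin 3 × Fin 3 × Fin 3) ℂ :=
  fun p q => R (p.1, p.2.1) (q.1, q.2.1) * (if p.2.2 = q.2.2 then 1 else 0)

/-- `1 ⊗ R̂` acting on `V ⊗ V ⊗ V` with `V = ℂ^3`. -/
def R2 (R : Matrix (Fin 3 × Fin 3) (Fin 3 × Fin 3) ℂ) :
    Matrix (Fin 3 × Fin 3 × Fin 3) (Fin 3 × Fin 3 × Fin 3) ℂ :=
  fun p q => (if p.1 = q.1 then 1 else 0) * R (p.2.1, p.2.2) (q.2.1, q.2.2)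

/-- The braid relation `R̂₁R̂₂R̂₁ = R̂₂R̂₁R̂₂`. -/
def Braid (R : Matrix (Fin 3 × Fin 3) (Fin 3 × Fin 3) ℂ) : Prop :=
  R1 R * R2 R * R1 R = R2 R * R1 R * R2 R

/-- position within the charge-1 sector: |10⟩, |01⟩. -/
def f1 (p : Fin 3 × Fin 3) : Fin 2 := if p = (1, 0) then 0 else 1

/-- position within the charge-2 sector: |20⟩, |11⟩, |02⟩. -/
def f2 (p : Fin 3 × Fin 3) : Fin 3 := if p = (2, 0) then 0 else if p = (1, 1) then 1 else 2

/-- position within the charge-3 sector: |21⟩, |12⟩. -/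
def f3 (p : Fin 3 × Fin 3) : Fin 2 := if p = (2, 1) then 0 else 1

/-- The 9×9 matrix with blocks of sizes 1,2,3,2,1 on the graded basis
|00⟩,|10⟩,|01⟩,|20⟩,|11⟩,|02⟩,|21⟩,|12⟩,|22⟩. -/
def blockR (b0 : ℂ) (B1 : Matrix (Fin 2) (Fin 2) ℂ) (B2 : Matrix (Fin 3) (Fin 3) ℂ)
    (B3 : Matrix (Fin 2) (Fin 2) ℂ) (b4 : ℂ) : Matrix (Fin 3 × Fin 3) (Fin 3 × Fin 3) ℂ :=
  fun p q =>
    if (p.1 : ℕ) + (p.2 : ℕ) ≠ (q.1 : ℕ) + (q.2 : ℕ) then 0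
    else if (p.1 : ℕ) + (p.2 : ℕ) = 0 then b0
    else if (p.1 : ℕ) + (p.2 : ℕ) = 1 then B1 (f1 p) (f1 q)
    else if (p.1 : ℕ) + (p.2 : ℕ) = 2 then B2 (f2 p) (f2 q)
    else if (p.1 : ℕ) + (p.2 : ℕ) = 3 then B3 (f3 p) (f3 q)
    else b4

/-! The gauge transformation `R̂_{pq} ↦ t^{p₁-q₁} R̂_{pq}` preserves the braid relation for a
charge-conserving `R̂`: on `V ⊗ V ⊗ V` both `R̂₁` and `R̂₂` are transformed by conjugation with the
same diagonal matrix `t^{2p₁+p₂}`. With `t = c` it carries the solution to the one with `c = 1`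
and `x₂` replaced by `x₂ / c`, for which the braid relation is checked entry by entry using
`ς² = -1`; entries of different total charge vanish on both sides. -/

def ConservesCharge (X : Matrix (Fin 3 × Fin 3) (Fin 3 × Fin 3) ℂ) : Prop :=
  ∀ p q : Fin 3 × Fin 3, (p.1 : ℕ) + p.2 ≠ q.1 + q.2 → X p q = 0

lemma conservesCharge_blockR (b0 : ℂ) (B1 : Matrix (Fin 2) (Fin 2) ℂ)
    (B2 : Matrix (Fin 3) (Fin 3) ℂ) (B3 : Matrix (Fin 2) (Fin 2) ℂ) (b4 : ℂ) :
    ConservesCharge (blockR b0 B1 B2 B3 b4) :=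
  fun _ _ h => if_pos h

lemma ConservesCharge.charge_eq {X : Matrix (Fin 3 × Fin 3) (Fin 3 × Fin 3) ℂ}
    (hX : ConservesCharge X) {p q : Fin 3 × Fin 3} (h : X p q ≠ 0) :
    (p.1 : ℕ) + p.2 = q.1 + q.2 :=
  not_imp_comm.1 (hX p q) h

section BraidEntries

variable (X : Matrix (Fin 3 × Fin 3) (Fin 3 × Fin 3) ℂ) (i j k l m n : Fin 3)

lemma R1_mul_R2_mul_R1_apply :
    (R1 X * R2 X * R1 X) (i, j, k) (l, m, n) =
      ∑ a, ∑ b, ∑ u, X (i, j) (a, b) * X (b, k) (u, n) * X (a, u) (l, m) := by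
  simp [Matrix.mul_apply, R1, R2, Fintype.sum_prod_type, Finset.sum_mul, mul_ite, ite_mul,
    Finset.sum_ite_eq, Finset.sum_ite_eq', mul_assoc]
  exact Finset.sum_congr rfl fun a _ => Finset.sum_comm

lemma R2_mul_R1_mul_R2_apply :
    (R2 X * R1 X * R2 X) (i, j, k) (l, m, n) =
      ∑ b, ∑ u, ∑ t, X (j, k) (t, u) * X (i, t) (l, b) * X (b, u) (m, n) := by
  simp [Matrix.mul_apply, R1, R2, Fintype.sum_prod_type, Finset.sum_mul, mul_ite, ite_mul,
    Finset.sum_ite_eq, Finset.sum_ite_eq', mul_assoc]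

variable {X i j k l m n}

lemma R1_mul_R2_mul_R1_apply_of_charge_ne (hX : ConservesCharge X)
    (h : (i : ℕ) + j + k ≠ l + m + n) : (R1 X * R2 X * R1 X) (i, j, k) (l, m, n) = 0 := by
  rw [R1_mul_R2_mul_R1_apply]
  refine Finset.sum_eq_zero fun a _ => Finset.sum_eq_zero fun b _ => Finset.sum_eq_zero fun u _ => ?_
  by_contra hne
  simp only [mul_eq_zero, not_or] at hne
  have h₁ := hX.charge_eq hne.1.1
  have h₂ := hX.charge_eq hne.1.2
  have h₃ := hX.charge_eq hne.2
  simp only at h₁ h₂ h₃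
  omega

lemma R2_mul_R1_mul_R2_apply_of_charge_ne (hX : ConservesCharge X)
    (h : (i : ℕ) + j + k ≠ l + m + n) : (R2 X * R1 X * R2 X) (i, j, k) (l, m, n) = 0 := by
  rw [R2_mul_R1_mul_R2_apply]
  refine Finset.sum_eq_zero fun b _ => Finset.sum_eq_zero fun u _ => Finset.sum_eq_zero fun t _ => ?_
  by_contra hne
  simp only [mul_eq_zero, not_or] at hne
  have h₁ := hX.charge_eq hne.1.1
  have h₂ := hX.charge_eq hne.1.2
  have h₃ := hX.charge_eq hne.2
  simp only at h₁ h₂ h₃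
  omega

end BraidEntries

lemma pow_add_mul_inv_pow_add {G₀ : Type*} [CommGroupWithZero G₀] {t : G₀} (ht : t ≠ 0)
    (n a b : ℕ) : t ^ (n + a) * t⁻¹ ^ (n + b) = t ^ a * t⁻¹ ^ b := by
  rw [pow_add, pow_add, mul_mul_mul_comm, inv_pow t n, mul_inv_cancel₀ (pow_ne_zero n ht), one_mul]

def chargeTwist (t : ℂ) (X : Matrix (Fin 3 × Fin 3) (Fin 3 × Fin 3) ℂ) :
    Matrix (Fin 3 × Fin 3) (Fin 3 × Fin 3) ℂ :=
  fun p q => t ^ (p.1 : ℕ) * X p q * t⁻¹ ^ (q.1 : ℕ)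

def chargeTwistDiag (t : ℂ) : Matrix (Fin 3 × Fin 3 × Fin 3) (Fin 3 × Fin 3 × Fin 3) ℂ :=
  diagonal fun p => t ^ (2 * (p.1 : ℕ) + p.2.1)

section ChargeTwist

variable {t : ℂ} {X : Matrix (Fin 3 × Fin 3) (Fin 3 × Fin 3) ℂ}

lemma chargeTwistDiag_inv_mul (ht : t ≠ 0) : chargeTwistDiag t⁻¹ * chargeTwistDiag t = 1 := by
  simp [chargeTwistDiag, inv_pow, ht]

lemma R1_chargeTwist (ht : t ≠ 0) (hX : ConservesCharge X) :
    R1 (chargeTwist t X) = chargeTwistDiag t * R1 X * chargeTwistDiag t⁻¹ := by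
  ext ⟨i, j, k⟩ ⟨l, m, n⟩
  simp only [R1, chargeTwist, chargeTwistDiag, diagonal_mul, mul_diagonal]
  by_cases hc : (i : ℕ) + j = l + m
  · rw [show 2 * (i : ℕ) + j = (l + m) + i by omega, show 2 * (l : ℕ) + m = (l + m) + l by omega]
    linear_combination (X (i, j) (l, m) * if k = n then 1 else 0) *
      (pow_add_mul_inv_pow_add ht (l + m) i l).symm
  · simp [hX (i, j) (l, m) hc]

lemma R2_chargeTwist (ht : t ≠ 0) :
    R2 (chargeTwist t X) = chargeTwistDiag t * R2 X * chargeTwistDiag t⁻¹ := by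
  ext ⟨i, j, k⟩ ⟨l, m, n⟩
  simp only [R2, chargeTwist, chargeTwistDiag, diagonal_mul, mul_diagonal]
  by_cases hi : i = l
  · subst hi
    rw [if_pos rfl, one_mul]
    linear_combination X (j, k) (m, n) * (pow_add_mul_inv_pow_add ht (2 * i) j m).symm
  · simp [hi]

lemma Braid.chargeTwist (ht : t ≠ 0) (hX : ConservesCharge X) (h : Braid X) :
    Braid (chargeTwist t X) := by
  have conj (A B C : Matrix (Fin 3 × Fin 3 × Fin 3) (Fin 3 × Fin 3 × Fin 3) ℂ) :
      chargeTwistDiag t * A * chargeTwistDiag t⁻¹ * (chargeTwistDiag t * B * chargeTwistDiag t⁻¹) *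
          (chargeTwistDiag t * C * chargeTwistDiag t⁻¹) =
        chargeTwistDiag t * (A * B * C) * chargeTwistDiag t⁻¹ := by
    simp only [mul_assoc, ← mul_assoc (chargeTwistDiag t⁻¹) (chargeTwistDiag t),
      chargeTwistDiag_inv_mul ht, one_mul]
  rw [Braid, R1_chargeTwist ht hX, R2_chargeTwist ht, conj, conj, h]

end ChargeTwist

lemma sol5512_eq_chargeTwist (s c x2 : ℂ) (hc : c ≠ 0) :
    blockR 1 !![s + 1, -(s / c); c, 0]
        !![0, 0, -(s / c ^ 2); x2, 1, x2 * s / c ^ 2; c ^ 2, 0, s + 1]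
        !![0, -(1 / c); s * c, s + 1] s =
      chargeTwist c⁻¹ (blockR 1 !![s + 1, -s; 1, 0]
        !![0, 0, -s; x2 / c, 1, x2 / c * s; 1, 0, s + 1] !![0, -1; s, s + 1] s) := by
  ext ⟨i, j⟩ ⟨k, l⟩
  fin_cases i <;> fin_cases j <;> fin_cases k <;> fin_cases l <;>
    simp [chargeTwist, blockR, f1, f2, f3] <;> field_simp

set_option maxHeartbeats 4000000 in
lemma braid_sol5512_normalized (s y : ℂ) (hs : s ^ 2 = -1) :
    Braid (blockR 1 !![s + 1, -s; 1, 0] !![0, 0, -s; y, 1, y * s; 1, 0, s + 1]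
      !![0, -1; s, s + 1] s) := by
  rw [Braid]
  ext ⟨i, j, k⟩ ⟨l, m, n⟩
  by_cases hc : (i : ℕ) + j + k = l + m + n
  · rw [R1_mul_R2_mul_R1_apply, R2_mul_R1_mul_R2_apply]
    fin_cases i <;> fin_cases j <;> fin_cases k <;> fin_cases l <;> fin_cases m <;> fin_cases n <;>
      (try simp at hc) <;>
      simp +decide only [Fin.sum_univ_three, blockR, f1, f2, f3, Fin.isValue, Matrix.of_apply,
        Matrix.cons_val', Matrix.cons_val_zero, Matrix.cons_val_one, Matrix.cons_val_two,
        Matrix.empty_val', Matrix.cons_val_fin_one, Matrix.head_cons, Matrix.tail_cons,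
        Matrix.head_fin_const, if_true, if_false, mul_zero, zero_mul, add_zero, zero_add,
        Fin.zero_eta, Fin.mk_one, Fin.reduceFinMk] <;>
      grind
  · rw [R1_mul_R2_mul_R1_apply_of_charge_ne (conservesCharge_blockR _ _ _ _ _) hc,
      R2_mul_R1_mul_R2_apply_of_charge_ne (conservesCharge_blockR _ _ _ _ _) hc]

/-- solution 5.5.1.2 satisfies the braid relation. -/
theorem sol5512_braid (s c x2 : ℂ) (hs : s = Complex.I ∨ s = -Complex.I) (hc : c ≠ 0) :
    Braid (blockR 1 !![s + 1, -(s / c); c, 0]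
      !![0, 0, -(s / c ^ 2); x2, 1, x2 * s / c ^ 2; c ^ 2, 0, s + 1]
      !![0, -(1 / c); s * c, s + 1] s) := by
  have hs2 : s ^ 2 = -1 := by
    rcases hs with rfl | rfl <;> simp
  rw [sol5512_eq_chargeTwist s c x2 hc]
  exact (braid_sol5512_normalized s (x2 / c) hs2).chargeTwist (inv_ne_zero hc)
    (conservesCharge_blockR _ _ _ _ _)
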